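/- arXiv:1706.08780 — 5 statements merged into one kernel-verified Lean document; each statement's English description precedes it below -/
import Mathlib

section
/- Let μ, ν be Borel probability measures on ℝ^d and suppose there exists a sequence (y_n) in ℝ^d such that τ_{y_n} ν converges weakly to μ. Then the sequence (y_n) is bounded, and there exists y* ∈ ℝ^d such that μ = τ_{y*} ν; in particular μ and ν lie in the same translation orbit. -/
/-!
Choose balls `B(0, R)` and `B(0, M)` carrying more than half of the mass of `μ` and of `ν`.
By the portmanteau theorem, `τ_{yₙ} ν (B(0, R)) = ν (B(-yₙ, R)) > 1/2` for large `n`, so this ball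
must meet `B(0, M)`, whence `‖yₙ‖ < M + R`. Along a subsequence `yₙ → y*`, so continuity of
`y ↦ τ_y ν` and uniqueness of weak limits give `μ = τ_{y*} ν`.
-/

open MeasureTheory Filter Topology
open Metric Set BoundedContinuousFunction

namespace MeasureTheory

lemma Measure.exists_lt_measure_ball {X : Type*} [PseudoMetricSpace X] [MeasurableSpace X]
    (μ : Measure X) (x : X) {r : ENNReal} (hr : r < μ univ) : ∃ R : ℝ, r < μ (ball x R) := by
  have h := tendsto_measure_iUnion_atTop (μ := μ)
    (fun _ _ hmn => ball_subset_ball (Nat.cast_le.2 hmn) : Monotone fun n : ℕ => ball x n)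
  rw [iUnion_ball_nat] at h
  obtain ⟨n, hn⟩ := (h.eventually (lt_mem_nhds hr)).exists
  exact ⟨n, hn⟩

namespace ProbabilityMeasure

variable {X : Type*} [MeasurableSpace X]

section Topological
variable [TopologicalSpace X] [AddGroup X] [ContinuousAdd X] [BorelSpace X]

noncomputable def translate (ν : ProbabilityMeasure X) (a : X) : ProbabilityMeasure X :=
  ν.map (continuous_add_const a).measurable.aemeasurable

lemma integral_translate (ν : ProbabilityMeasure X) (a : X) (f : X →ᵇ ℝ) :
    ∫ x, f x ∂(ν.translate a : Measure X) = ∫ x, f (x + a) ∂(ν : Measure X) :=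
  integral_map (continuous_add_const a).aemeasurable f.continuous.aestronglyMeasurable

lemma continuous_translate [FirstCountableTopology X] (ν : ProbabilityMeasure X) :
    Continuous ν.translate := by
  refine continuous_iff_continuousAt.2 fun a => tendsto_iff_forall_integral_tendsto.2 fun f => ?_
  simp only [integral_translate]
  refine (continuous_of_dominated (bound := fun _ => ‖f‖) (fun b => ?_) (fun b => ?_)
    (integrable_const _) (Eventually.of_forall fun x => ?_)).continuousAt
  · exact (f.continuous.comp (continuous_add_const b)).aestronglyMeasurable
  · exact Eventually.of_forall fun x => f.norm_coe_le_norm _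
  · exact f.continuous.comp (continuous_const_add x)

end Topological

section Normed
variable [SeminormedAddCommGroup X] [BorelSpace X]

lemma isBoundedUnder_norm_of_tendsto_translate {ι : Type*} {l : Filter ι}
    {ν μ : ProbabilityMeasure X} {y : ι → X} (h : Tendsto (fun i => ν.translate (y i)) l (𝓝 μ)) :
    IsBoundedUnder (· ≤ ·) l fun i => ‖y i‖ := by
  have half_lt_one : (2⁻¹ : ENNReal) < 1 := by norm_num
  obtain ⟨R, hR⟩ := (μ : Measure X).exists_lt_measure_ball 0 (by rwa [measure_univ])
  obtain ⟨M, hM⟩ := (ν : Measure X).exists_lt_measure_ball 0 (by rwa [measure_univ])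
  have hmass := eventually_lt_of_lt_liminf
    (hR.trans_le (le_liminf_measure_open_of_tendsto h isOpen_ball))
  refine isBoundedUnder_of_eventually_le (a := M + R) ?_
  filter_upwards [hmass] with i hi
  rw [translate, toMeasure_map,
    Measure.map_apply (measurable_add_const (y i)) measurableSet_ball] at hi
  obtain ⟨x, hxM, hxR⟩ := nonempty_inter_of_measure_lt_add (ν : Measure X)
    (s := ball 0 M) (u := univ) (measurableSet_ball.preimage (measurable_add_const (y i)))
    (subset_univ _) (subset_univ _)
    (by rw [measure_univ, ← ENNReal.inv_two_add_inv_two]; exact ENNReal.add_lt_add hM hi)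
  rw [mem_ball_zero_iff] at hxM
  rw [mem_preimage, mem_ball_zero_iff] at hxR
  calc ‖y i‖ = ‖-x + (x + y i)‖ := by rw [neg_add_cancel_left]
    _ ≤ ‖x‖ + ‖x + y i‖ := (norm_add_le _ _).trans_eq (by rw [norm_neg])
    _ ≤ M + R := add_le_add hxM.le hxR.le

theorem exists_eq_translate_of_tendsto_translate [ProperSpace X] {ν μ : ProbabilityMeasure X}
    {y : ℕ → X} (h : Tendsto (fun n => ν.translate (y n)) atTop (𝓝 μ)) :
    Bornology.IsBounded (range y) ∧ ∃ a, μ = ν.translate a := by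
  have hbdd : Bornology.IsBounded (range y) := by
    obtain ⟨C, hC⟩ := (isBoundedUnder_norm_of_tendsto_translate h).bddAbove_range
    exact isBounded_iff_forall_norm_le.2 ⟨C, forall_mem_range.2 fun n => hC (mem_range_self n)⟩
  obtain ⟨a, -, φ, hφ, hya⟩ := tendsto_subseq_of_bounded hbdd (mem_range_self (f := y))
  exact ⟨hbdd, a, tendsto_nhds_unique (h.comp hφ.tendsto_atTop)
    ((ν.continuous_translate.tendsto a).comp hya)⟩

end Normed

end ProbabilityMeasure
end MeasureTheory

/-- If translates `τ_{yₙ} ν` of a probability measure `ν` on `ℝ^d` converge weakly to a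
probability measure `μ` (i.e. against every bounded continuous test function), then the sequence
`(yₙ)` is bounded and `μ = τ_{y*} ν` for some `y*`; in particular `μ` and `ν` lie in the same
translation orbit. -/
theorem stmt_4 (d : ℕ) (μ ν : Measure (EuclideanSpace ℝ (Fin d)))
    [IsProbabilityMeasure μ] [IsProbabilityMeasure ν]
    (y : ℕ → EuclideanSpace ℝ (Fin d))
    (hweak : ∀ f : BoundedContinuousFunction (EuclideanSpace ℝ (Fin d)) ℝ,
      Tendsto (fun n => ∫ x, f x ∂(ν.map (fun x => x + y n))) atTop
        (𝓝 (∫ x, f x ∂μ))) :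
    (∃ C : ℝ, ∀ n, ‖y n‖ ≤ C) ∧
      ∃ ystar : EuclideanSpace ℝ (Fin d), μ = ν.map (fun x => x + ystar) := by
  have h : Tendsto (fun n => ProbabilityMeasure.translate ⟨ν, ‹_›⟩ (y n)) atTop
      (𝓝 (⟨μ, ‹_›⟩ : ProbabilityMeasure _)) :=
    ProbabilityMeasure.tendsto_iff_forall_integral_tendsto.2 hweak
  obtain ⟨hbdd, a, ha⟩ := ProbabilityMeasure.exists_eq_translate_of_tendsto_translate h
  obtain ⟨C, hC⟩ := isBounded_iff_forall_norm_le.1 hbdd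
  exact ⟨⟨C, fun n => hC _ (mem_range_self n)⟩, a, congrArg Subtype.val ha⟩
end

section
/- Let σ > 0, η > 0, ℓ ≥ 1, n ≥ 2 and let V̂(x̃) for x̃ = (x̃₁,…,x̃ₙ) in the zero-sum hyperplane M_{d,n} ⊂ (ℝ^d)^n be defined by exp(−(2n/σ²) V̂(x̃)) = ∫_{ℝ^d} exp(−(2η/σ²) Σ_{i=1}^n |x̃_i + ζ|^ℓ) dζ. Then for all x̃ ∈ M_{d,n}: (σ²/(2n)) log(n^{d/ℓ}/z(η)) ≤ V̂(x̃) ≤ (2^{ℓ−1}η/n) Σ_{i=1}^n |x̃_i|^ℓ + (σ²/(2n)) log((2^{ℓ−1}n)^{d/ℓ}/z(η)), where z(η) = ∫_{ℝ^d} exp(−(2η/σ²)|x|^ℓ) dx. -/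
/-!
The zero-sum constraint makes `ζ` the barycentre of the points `x̃ᵢ + ζ`, so by Jensen
`n ‖ζ‖^ℓ ≤ ∑ ‖x̃ᵢ + ζ‖^ℓ`; in the other direction `‖x̃ᵢ + ζ‖^ℓ ≤ 2^{ℓ-1} (‖x̃ᵢ‖^ℓ + ‖ζ‖^ℓ)`.
Both bounds compare the integrand defining `exp(−(2n/σ²) V̂(x̃))` with `exp(−b ‖ζ‖^ℓ)` for a
rescaled `b`, whose integral is `z(η)` divided by the scale factor to the power `d/ℓ`; taking
logarithms gives the two estimates.
-/

open MeasureTheory Real Module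

theorem Real.rpow_add_le_mul_rpow_add_rpow {a b p : ℝ} (ha : 0 ≤ a) (hb : 0 ≤ b) (hp : 1 ≤ p) :
    (a + b) ^ p ≤ 2 ^ (p - 1) * (a ^ p + b ^ p) := by
  lift a to NNReal using ha
  lift b to NNReal using hb
  exact_mod_cast NNReal.rpow_add_le_mul_rpow_add_rpow a b hp

section Pointwise

variable {E ι : Type*} [Fintype ι] {p : ℝ}

theorem sum_norm_add_rpow_le [SeminormedAddCommGroup E] (x : ι → E) (ζ : E) (hp : 1 ≤ p) :
    ∑ i, ‖x i + ζ‖ ^ p ≤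
      2 ^ (p - 1) * ∑ i, ‖x i‖ ^ p + 2 ^ (p - 1) * Fintype.card ι * ‖ζ‖ ^ p :=
  calc ∑ i, ‖x i + ζ‖ ^ p ≤ ∑ i, 2 ^ (p - 1) * (‖x i‖ ^ p + ‖ζ‖ ^ p) := by
        gcongr with i
        exact (rpow_le_rpow (norm_nonneg _) (norm_add_le _ _) (by linarith)).trans
          (rpow_add_le_mul_rpow_add_rpow (norm_nonneg _) (norm_nonneg _) hp)
    _ = _ := by
        simp only [mul_add, Finset.sum_add_distrib, ← Finset.mul_sum, Finset.sum_const,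
          Finset.card_univ, nsmul_eq_mul]
        ring

/-- Jensen: `ζ` is the barycentre of the points `x i + ζ` when the `x i` sum to zero. -/
theorem card_mul_norm_rpow_le_sum_norm_add_rpow [NormedAddCommGroup E] [NormedSpace ℝ E]
    {x : ι → E} (hx : ∑ i, x i = 0) (ζ : E) (hp : 1 ≤ p) :
    Fintype.card ι * ‖ζ‖ ^ p ≤ ∑ i, ‖x i + ζ‖ ^ p := by
  set n : ℝ := (Fintype.card ι : ℝ)
  rcases (Fintype.card ι).eq_zero_or_pos with hι | hι
  · simp [n, hι, Finset.sum_nonneg, rpow_nonneg]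
  have hn : 0 < n := by simpa [n] using hι
  have hsum : n * ‖ζ‖ ≤ ∑ i, ‖x i + ζ‖ := by
    calc n * ‖ζ‖ = ‖∑ i, (x i + ζ)‖ := by
          simp [Finset.sum_add_distrib, hx, ← Nat.cast_smul_eq_nsmul ℝ, norm_smul, n]
      _ ≤ ∑ i, ‖x i + ζ‖ := norm_sum_le _ _
  have hpow : n ^ (p - 1) * (n * ‖ζ‖ ^ p) ≤ n ^ (p - 1) * ∑ i, ‖x i + ζ‖ ^ p := by
    calc n ^ (p - 1) * (n * ‖ζ‖ ^ p) = (n * ‖ζ‖) ^ p := by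
          rw [mul_rpow hn.le (norm_nonneg _), ← mul_assoc, ← rpow_add_one hn.ne', sub_add_cancel]
      _ ≤ (∑ i, ‖x i + ζ‖) ^ p := by gcongr
      _ ≤ n ^ (p - 1) * ∑ i, ‖x i + ζ‖ ^ p := by
          simpa [n] using rpow_sum_le_const_mul_sum_rpow_of_nonneg Finset.univ hp
            (fun i _ => norm_nonneg (x i + ζ))
  exact le_of_mul_le_mul_left hpow (rpow_pos_of_pos hn _)

end Pointwise

section HaarIntegral

variable {E : Type*} [NormedAddCommGroup E] [NormedSpace ℝ E] [FiniteDimensional ℝ E]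
  [MeasurableSpace E] [BorelSpace E] (μ : Measure E) [μ.IsAddHaarMeasure] {b p : ℝ}

theorem integrable_exp_neg_mul_norm_rpow (hb : 0 < b) (hp : 0 < p) :
    Integrable (fun x : E => exp (-b * ‖x‖ ^ p)) μ := by
  rcases subsingleton_or_nontrivial E with _ | _
  · exact (integrable_const (exp (-b * ‖(0 : E)‖ ^ p))).congr
      (Filter.Eventually.of_forall fun x => by rw [Subsingleton.elim x 0])
  · -- polar coordinates: reduce to `∫₀^∞ y^(dim E - 1) exp(-b y^p) dy < ∞`
    rw [integrable_fun_norm_addHaar μ (f := fun y => exp (-b * y ^ p))]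
    refine (integrableOn_rpow_mul_exp_neg_mul_rpow (s := (finrank ℝ E - 1 : ℕ))
      (by linarith [(finrank ℝ E - 1).cast_nonneg (α := ℝ)])
      hp hb).congr_fun (fun y _ => ?_) measurableSet_Ioi
    simp [rpow_natCast]

theorem integral_exp_neg_mul_norm_rpow_pos (hb : 0 < b) (hp : 0 < p) :
    0 < ∫ x : E, exp (-b * ‖x‖ ^ p) ∂μ :=
  integral_exp_pos (integrable_exp_neg_mul_norm_rpow μ hb hp)

theorem integral_exp_neg_mul_mul_norm_rpow {t : ℝ} (ht : 0 < t) (hp : 0 < p) :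
    ∫ x : E, exp (-(b * t) * ‖x‖ ^ p) ∂μ
      = (∫ x : E, exp (-b * ‖x‖ ^ p) ∂μ) / t ^ ((finrank ℝ E : ℝ) / p) := by
  have hscale : ∀ x : E, exp (-(b * t) * ‖x‖ ^ p) = exp (-b * ‖t ^ p⁻¹ • x‖ ^ p) := by
    intro x
    rw [norm_smul, norm_of_nonneg (by positivity), mul_rpow (by positivity) (norm_nonneg _),
      ← rpow_mul ht.le, inv_mul_cancel₀ hp.ne', rpow_one]
    ring_nf
  simp_rw [hscale]
  rw [Measure.integral_comp_smul_of_nonneg μ (fun x : E => exp (-b * ‖x‖ ^ p)) _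
      (hR := by positivity), smul_eq_mul,
    ← rpow_natCast, ← rpow_mul ht.le, inv_mul_eq_div, inv_mul_eq_div, div_eq_inv_mul]

variable {ι : Type*} [Fintype ι] [Nonempty ι] {c : ℝ}

theorem integrable_exp_neg_mul_sum_norm_add_rpow (x : ι → E) (hc : 0 < c) (hp : 1 ≤ p) :
    Integrable (fun ζ : E => exp (-c * ∑ i, ‖x i + ζ‖ ^ p)) μ := by
  obtain ⟨j⟩ := ‹Nonempty ι›
  have hp0 : 0 ≤ p := by linarith
  refine ((integrable_exp_neg_mul_norm_rpow μ hc (by linarith)).comp_add_left (x j)).mono'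
    (by fun_prop) (Filter.Eventually.of_forall fun ζ => ?_)
  rw [norm_of_nonneg (exp_nonneg _), neg_mul, neg_mul]
  gcongr
  exact Finset.single_le_sum (f := fun i => ‖x i + ζ‖ ^ p) (fun i _ => by positivity)
    (Finset.mem_univ j)

theorem integral_exp_neg_mul_sum_norm_add_rpow_le {x : ι → E} (hx : ∑ i, x i = 0) (hc : 0 < c)
    (hp : 1 ≤ p) :
    ∫ ζ, exp (-c * ∑ i, ‖x i + ζ‖ ^ p) ∂μ
      ≤ (∫ ζ, exp (-c * ‖ζ‖ ^ p) ∂μ) / (Fintype.card ι : ℝ) ^ ((finrank ℝ E : ℝ) / p) := by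
  have hn : (0 : ℝ) < Fintype.card ι := by exact_mod_cast Fintype.card_pos
  rw [← integral_exp_neg_mul_mul_norm_rpow μ hn (by linarith)]
  refine integral_mono (integrable_exp_neg_mul_sum_norm_add_rpow μ x hc hp)
    (integrable_exp_neg_mul_norm_rpow μ (by positivity) (by linarith)) fun ζ => ?_
  dsimp only
  rw [neg_mul, neg_mul, mul_assoc]
  gcongr
  exact card_mul_norm_rpow_le_sum_norm_add_rpow hx ζ hp

theorem exp_mul_integral_le_integral_exp_neg_mul_sum_norm_add_rpow (x : ι → E) (hc : 0 < c)
    (hp : 1 ≤ p) :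
    exp (-(c * 2 ^ (p - 1)) * ∑ i, ‖x i‖ ^ p) * ((∫ ζ, exp (-c * ‖ζ‖ ^ p) ∂μ)
        / (2 ^ (p - 1) * Fintype.card ι : ℝ) ^ ((finrank ℝ E : ℝ) / p))
      ≤ ∫ ζ, exp (-c * ∑ i, ‖x i + ζ‖ ^ p) ∂μ := by
  have hn : (0 : ℝ) < 2 ^ (p - 1) * Fintype.card ι := by
    have : (0 : ℝ) < Fintype.card ι := by exact_mod_cast Fintype.card_pos
    positivity
  rw [← integral_exp_neg_mul_mul_norm_rpow μ hn (by linarith), ← integral_const_mul]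
  refine integral_mono
    ((integrable_exp_neg_mul_norm_rpow μ (by positivity) (by linarith)).const_mul _)
    (integrable_exp_neg_mul_sum_norm_add_rpow μ x hc hp) fun ζ => ?_
  dsimp only
  rw [← exp_add, neg_mul, neg_mul, neg_mul, ← neg_add, mul_assoc, mul_assoc, ← mul_add]
  gcongr
  linarith [sum_norm_add_rpow_le x ζ hp]

end HaarIntegral

theorem stmt_6_general (d n : ℕ) (hn : 2 ≤ n) (σ η ℓ : ℝ)
    (hσ : 0 < σ) (hη : 0 < η) (hℓ : 1 ≤ ℓ) (z : ℝ)
    (hz : z = ∫ x : EuclideanSpace ℝ (Fin d), Real.exp (-(2 * η / σ ^ 2) * ‖x‖ ^ ℓ))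
    (Vhat : (Fin n → EuclideanSpace ℝ (Fin d)) → ℝ)
    (hV : ∀ xt : Fin n → EuclideanSpace ℝ (Fin d),
      Real.exp (-(2 * n / σ ^ 2) * Vhat xt)
        = ∫ ζ : EuclideanSpace ℝ (Fin d),
            Real.exp (-(2 * η / σ ^ 2) * ∑ i : Fin n, ‖xt i + ζ‖ ^ ℓ))
    (xt : Fin n → EuclideanSpace ℝ (Fin d)) (hxt : ∑ i : Fin n, xt i = 0) :
    (σ ^ 2 / (2 * n)) * Real.log ((n : ℝ) ^ ((d : ℝ) / ℓ) / z) ≤ Vhat xt ∧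
      Vhat xt ≤ (2 ^ (ℓ - 1) * η / n) * ∑ i : Fin n, ‖xt i‖ ^ ℓ
        + (σ ^ 2 / (2 * n)) * Real.log ((2 ^ (ℓ - 1) * (n : ℝ)) ^ ((d : ℝ) / ℓ) / z) := by
  have : Nonempty (Fin n) := ⟨⟨0, by omega⟩⟩
  have hn0 : (0 : ℝ) < n := by exact_mod_cast (by omega : 0 < n)
  have hc : 0 < 2 * η / σ ^ 2 := by positivity
  have hz0 : 0 < z := hz ▸ integral_exp_neg_mul_norm_rpow_pos volume hc (by linarith)
  have hI_le := integral_exp_neg_mul_sum_norm_add_rpow_le volume hxt hc hℓ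
  have hI_ge := exp_mul_integral_le_integral_exp_neg_mul_sum_norm_add_rpow volume xt hc hℓ
  rw [← hz, ← hV xt, finrank_euclideanSpace_fin, Fintype.card_fin] at hI_le hI_ge
  replace hI_le := log_le_log (exp_pos _) hI_le
  replace hI_ge := log_le_log (by positivity) hI_ge
  rw [log_exp] at hI_le hI_ge
  rw [log_mul (by positivity) (by positivity), log_exp] at hI_ge
  rw [← inv_div z, ← inv_div z, log_inv, log_inv]
  constructor
  · calc σ ^ 2 / (2 * n) * -log (z / (n : ℝ) ^ ((d : ℝ) / ℓ))
        ≤ σ ^ 2 / (2 * n) * (2 * n / σ ^ 2 * Vhat xt) := by gcongr; linarith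
      _ = Vhat xt := by field_simp
  · calc Vhat xt = σ ^ 2 / (2 * n) * (2 * n / σ ^ 2 * Vhat xt) := by field_simp
      _ ≤ σ ^ 2 / (2 * n) * (2 * η / σ ^ 2 * 2 ^ (ℓ - 1) * ∑ i, ‖xt i‖ ^ ℓ
            - log (z / (2 ^ (ℓ - 1) * (n : ℝ)) ^ ((d : ℝ) / ℓ))) := by gcongr; linarith
      _ = _ := by field_simp; ring

/-- Bounds on the effective confining potential `V̂` on the zero-sum hyperplane: if
`exp(−(2n/σ²) V̂(x̃)) = ∫ exp(−(2η/σ²) Σᵢ |x̃ᵢ + ζ|^ℓ) dζ`, then for any zero-sum configuration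
`x̃`,
`(σ²/(2n)) log(n^{d/ℓ}/z(η)) ≤ V̂(x̃) ≤ (2^{ℓ−1}η/n) Σᵢ |x̃ᵢ|^ℓ + (σ²/(2n)) log((2^{ℓ−1}n)^{d/ℓ}/z(η))`,
where `z(η) = ∫ exp(−(2η/σ²)|x|^ℓ) dx`. -/
theorem stmt_6 (d n : ℕ) (hd : 1 ≤ d) (hn : 2 ≤ n) (σ η ℓ : ℝ)
    (hσ : 0 < σ) (hη : 0 < η) (hℓ : 1 ≤ ℓ) (z : ℝ)
    (hz : z = ∫ x : EuclideanSpace ℝ (Fin d), Real.exp (-(2 * η / σ ^ 2) * ‖x‖ ^ ℓ))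
    (Vhat : (Fin n → EuclideanSpace ℝ (Fin d)) → ℝ)
    (hV : ∀ xt : Fin n → EuclideanSpace ℝ (Fin d),
      Real.exp (-(2 * n / σ ^ 2) * Vhat xt)
        = ∫ ζ : EuclideanSpace ℝ (Fin d),
            Real.exp (-(2 * η / σ ^ 2) * ∑ i : Fin n, ‖xt i + ζ‖ ^ ℓ))
    (xt : Fin n → EuclideanSpace ℝ (Fin d)) (hxt : ∑ i : Fin n, xt i = 0) :
    (σ ^ 2 / (2 * n)) * Real.log ((n : ℝ) ^ ((d : ℝ) / ℓ) / z) ≤ Vhat xt ∧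
      Vhat xt ≤ (2 ^ (ℓ - 1) * η / n) * ∑ i : Fin n, ‖xt i‖ ^ ℓ
        + (σ ^ 2 / (2 * n)) * Real.log ((2 ^ (ℓ - 1) * (n : ℝ)) ^ ((d : ℝ) / ℓ) / z) :=
  stmt_6_general d n hn σ η ℓ hσ hη hℓ z hz Vhat hV xt hxt
end

section
/- For every probability measure μ on ℝ, (1/2)∬ |x−y| dμ(x)dμ(y) = ∫_ℝ F_μ(x)(1 − F_μ(x)) dx, where F_μ is the cumulative distribution function of μ (both sides being possibly +∞ simultaneously). -/
open MeasureTheory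

lemma measG_aux (μ : Measure ℝ) : Measurable fun t : ℝ => μ (Set.Ioi t) := by
  have h : Antitone fun t : ℝ => μ (Set.Ioi t) :=
    fun a b hab => measure_mono (Set.Ioi_subset_Ioi hab)
  exact h.measurable

lemma key_aux (μ : Measure ℝ) [IsProbabilityMeasure μ] :
    ∫⁻ x, ∫⁻ y, ENNReal.ofReal (y - x) ∂μ ∂μ
      = ∫⁻ t, μ (Set.Iic t) * μ (Set.Ioi t) := by
  have hG : Measurable fun t : ℝ => μ (Set.Ioi t) := measG_aux μ
  have step1 : ∀ x : ℝ, ∫⁻ y, ENNReal.ofReal (y - x) ∂μ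
      = ∫⁻ t, (Set.Iic t).indicator (1 : ℝ → ENNReal) x * μ (Set.Ioi t) := by
    intro x
    have h1 : ∀ y : ℝ, ENNReal.ofReal (y - x)
        = ∫⁻ t, (Set.Iic t).indicator (1 : ℝ → ENNReal) x * (Set.Ioi t).indicator 1 y := by
      intro y
      have he : (fun t => (Set.Iic t).indicator (1 : ℝ → ENNReal) x * (Set.Ioi t).indicator 1 y)
          = (Set.Ico x y).indicator 1 := by
        ext t
        by_cases h1 : x ≤ t <;> by_cases h2 : t < y <;>
          simp [Set.indicator_apply, h1, h2]
      rw [he, lintegral_indicator_one measurableSet_Ico, Real.volume_Ico]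
    calc ∫⁻ y, ENNReal.ofReal (y - x) ∂μ
        = ∫⁻ y, ∫⁻ t, (Set.Iic t).indicator (1 : ℝ → ENNReal) x
            * (Set.Ioi t).indicator 1 y ∂volume ∂μ := by simp_rw [h1]
      _ = ∫⁻ t, ∫⁻ y, (Set.Iic t).indicator (1 : ℝ → ENNReal) x
            * (Set.Ioi t).indicator 1 y ∂μ ∂volume := by
          apply lintegral_lintegral_swap
          have hs1 : MeasurableSet {p : ℝ × ℝ | x ≤ p.2} :=
            measurableSet_le measurable_const measurable_snd
          have hs2 : MeasurableSet {p : ℝ × ℝ | p.2 < p.1} :=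
            measurableSet_lt measurable_snd measurable_fst
          have he : Function.uncurry (fun y t => (Set.Iic t).indicator (1 : ℝ → ENNReal) x
              * (Set.Ioi t).indicator 1 y)
              = fun p : ℝ × ℝ => {p : ℝ × ℝ | x ≤ p.2}.indicator 1 p
                * {p : ℝ × ℝ | p.2 < p.1}.indicator 1 p := by
            ext p
            simp [Function.uncurry, Set.indicator_apply]
          rw [he]
          exact ((measurable_const.indicator hs1).mul
            (measurable_const.indicator hs2)).aemeasurable
      _ = ∫⁻ t, (Set.Iic t).indicator (1 : ℝ → ENNReal) x * μ (Set.Ioi t) ∂volume := by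
          congr 1
          ext t
          have hm : Measurable ((Set.Ioi t).indicator (1 : ℝ → ENNReal)) :=
            measurable_one.indicator measurableSet_Ioi
          rw [lintegral_const_mul _ hm, lintegral_indicator_one measurableSet_Ioi]
  calc ∫⁻ x, ∫⁻ y, ENNReal.ofReal (y - x) ∂μ ∂μ
      = ∫⁻ x, ∫⁻ t, (Set.Iic t).indicator (1 : ℝ → ENNReal) x
          * μ (Set.Ioi t) ∂volume ∂μ := by simp_rw [step1]
    _ = ∫⁻ t, ∫⁻ x, (Set.Iic t).indicator (1 : ℝ → ENNReal) x
          * μ (Set.Ioi t) ∂μ ∂volume := by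
        apply lintegral_lintegral_swap
        have hs : MeasurableSet {p : ℝ × ℝ | p.1 ≤ p.2} :=
          measurableSet_le measurable_fst measurable_snd
        have he : Function.uncurry (fun x t => (Set.Iic t).indicator (1 : ℝ → ENNReal) x
            * μ (Set.Ioi t))
            = fun p : ℝ × ℝ => {p : ℝ × ℝ | p.1 ≤ p.2}.indicator 1 p * μ (Set.Ioi p.2) := by
          ext p
          simp [Function.uncurry, Set.indicator_apply]
        rw [he]
        exact ((measurable_const.indicator hs).mul (hG.comp measurable_snd)).aemeasurable
    _ = ∫⁻ t, μ (Set.Iic t) * μ (Set.Ioi t) := by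
        congr 1
        ext t
        have hm : Measurable ((Set.Iic t).indicator (1 : ℝ → ENNReal)) :=
          measurable_one.indicator measurableSet_Iic
        rw [lintegral_mul_const _ hm, lintegral_indicator_one measurableSet_Iic]

/-- For every probability measure `μ` on `ℝ`,
`(1/2)∬ |x−y| dμ(x)dμ(y) = ∫ F_μ(x)(1 − F_μ(x)) dx`, where `F_μ(x) = μ((−∞, x])`
(both sides possibly `+∞` simultaneously; stated with `ENNReal`-valued integrals). -/
theorem stmt_8 (μ : Measure ℝ) [IsProbabilityMeasure μ] :
    2⁻¹ * ∫⁻ x, ∫⁻ y, ENNReal.ofReal |x - y| ∂μ ∂μ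
      = ∫⁻ x, ENNReal.ofReal
          ((μ (Set.Iic x)).toReal * (1 - (μ (Set.Iic x)).toReal)) := by
  have habs : ∀ x y : ℝ, ENNReal.ofReal |x - y|
      = ENNReal.ofReal (y - x) + ENNReal.ofReal (x - y) := by
    intro x y
    rcases le_total x y with h | h
    · have hz : ENNReal.ofReal (x - y) = 0 := ENNReal.ofReal_of_nonpos (by linarith)
      rw [hz, add_zero, abs_sub_comm, abs_of_nonneg (sub_nonneg.2 h)]
    · have hz : ENNReal.ofReal (y - x) = 0 := ENNReal.ofReal_of_nonpos (by linarith)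
      rw [hz, zero_add, abs_of_nonneg (sub_nonneg.2 h)]
  have hm1 : Measurable fun p : ℝ × ℝ => ENNReal.ofReal (p.2 - p.1) :=
    (measurable_snd.sub measurable_fst).ennreal_ofReal
  have hm2 : Measurable fun p : ℝ × ℝ => ENNReal.ofReal (p.1 - p.2) :=
    (measurable_fst.sub measurable_snd).ennreal_ofReal
  have hsplit : ∫⁻ x, ∫⁻ y, ENNReal.ofReal |x - y| ∂μ ∂μ
      = (∫⁻ x, ∫⁻ y, ENNReal.ofReal (y - x) ∂μ ∂μ)
        + ∫⁻ x, ∫⁻ y, ENNReal.ofReal (x - y) ∂μ ∂μ := by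
    have hin : ∀ x : ℝ, ∫⁻ y, (ENNReal.ofReal (y - x) + ENNReal.ofReal (x - y)) ∂μ
        = (∫⁻ y, ENNReal.ofReal (y - x) ∂μ) + ∫⁻ y, ENNReal.ofReal (x - y) ∂μ := fun x =>
      lintegral_add_left ((measurable_id.sub measurable_const).ennreal_ofReal) _
    simp_rw [habs, hin]
    exact lintegral_add_left hm1.lintegral_prod_right' _
  have hswap : ∫⁻ x, ∫⁻ y, ENNReal.ofReal (x - y) ∂μ ∂μ
      = ∫⁻ y, ∫⁻ x, ENNReal.ofReal (x - y) ∂μ ∂μ :=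
    lintegral_lintegral_swap hm2.aemeasurable
  have hRHS : ∀ t : ℝ, ENNReal.ofReal
      ((μ (Set.Iic t)).toReal * (1 - (μ (Set.Iic t)).toReal))
      = μ (Set.Iic t) * μ (Set.Ioi t) := by
    intro t
    have hc : μ (Set.Ioi t) = 1 - μ (Set.Iic t) := by
      rw [← Set.compl_Iic]
      exact prob_compl_eq_one_sub measurableSet_Iic
    have hle : μ (Set.Iic t) ≤ 1 := prob_le_one
    have ht1 : (μ (Set.Ioi t)).toReal = 1 - (μ (Set.Iic t)).toReal := by
      rw [hc, ENNReal.toReal_sub_of_le hle ENNReal.one_ne_top, ENNReal.toReal_one]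
    rw [← ht1, ← ENNReal.toReal_mul,
      ENNReal.ofReal_toReal (ENNReal.mul_ne_top (measure_ne_top μ _) (measure_ne_top μ _))]
  calc 2⁻¹ * ∫⁻ x, ∫⁻ y, ENNReal.ofReal |x - y| ∂μ ∂μ
      = 2⁻¹ * ((∫⁻ t, μ (Set.Iic t) * μ (Set.Ioi t))
          + ∫⁻ t, μ (Set.Iic t) * μ (Set.Ioi t)) := by
        rw [hsplit, hswap, key_aux μ]
    _ = ∫⁻ t, μ (Set.Iic t) * μ (Set.Ioi t) := by
        rw [← two_mul, ← mul_assoc,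
          ENNReal.inv_mul_cancel (by norm_num) (by norm_num), one_mul]
    _ = ∫⁻ x, ENNReal.ofReal ((μ (Set.Iic x)).toReal * (1 - (μ (Set.Iic x)).toReal)) := by
        simp_rw [hRHS]
end

section
/- Let d, n ≥ 1, σ > 0, η > 0, ℓ ≥ 1, ε ∈ (0,1), and define V̂^η on the zero-sum hyperplane M_{d,n} by exp(−(2n/σ²)V̂^η(x̃)) = ∫_{ℝ^d} exp(−(2η/σ²)Σ_{i=1}^n|x̃_i+ζ|^ℓ)dζ. Then for all x̃ ∈ M_{d,n}: V̂^η((1−ε)x̃) ≤ −(σ²d/(2n)) log(1−ε) + V̂^{η(1−ε)}(x̃). -/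
open MeasureTheory

/-- Scaling bound for the effective confining potential: with
`exp(−(2n/σ²) V̂^η(x̃)) = ∫ exp(−(2η/σ²) Σᵢ |x̃ᵢ + ζ|^ℓ) dζ` for every `η > 0`, one has, for
every zero-sum configuration `x̃` and `ε ∈ (0,1)`,
`V̂^η((1−ε)x̃) ≤ −(σ²d/(2n)) log(1−ε) + V̂^{η(1−ε)}(x̃)`. -/
theorem stmt_14 (d n : ℕ) (hd : 1 ≤ d) (hn : 1 ≤ n) (σ η ℓ ε : ℝ)
    (hσ : 0 < σ) (hη : 0 < η) (hℓ : 1 ≤ ℓ) (hε : ε ∈ Set.Ioo (0 : ℝ) 1)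
    (Vhat : ℝ → (Fin n → EuclideanSpace ℝ (Fin d)) → ℝ)
    (hV : ∀ η' : ℝ, 0 < η' → ∀ xt : Fin n → EuclideanSpace ℝ (Fin d),
      Real.exp (-(2 * n / σ ^ 2) * Vhat η' xt)
        = ∫ ζ : EuclideanSpace ℝ (Fin d),
            Real.exp (-(2 * η' / σ ^ 2) * ∑ i : Fin n, ‖xt i + ζ‖ ^ ℓ))
    (xt : Fin n → EuclideanSpace ℝ (Fin d)) (hxt : ∑ i : Fin n, xt i = 0) :
    Vhat η (fun i => (1 - ε) • xt i)
      ≤ -(σ ^ 2 * d / (2 * n)) * Real.log (1 - ε) + Vhat (η * (1 - ε)) xt := by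
  obtain ⟨hε0, hε1⟩ := hε
  have h1ε : (0:ℝ) < 1 - ε := by linarith
  have h1ε1 : (1:ℝ) - ε ≤ 1 := by linarith
  have hℓpow : (1 - ε) ^ ℓ ≤ 1 - ε := by
    have := Real.rpow_le_rpow_of_exponent_ge h1ε h1ε1 hℓ
    simpa using this
  have hℓpos : 0 < (1 - ε) ^ ℓ := Real.rpow_pos_of_pos h1ε ℓ
  set F : ℝ → EuclideanSpace ℝ (Fin d) → ℝ :=
    fun η' ζ => Real.exp (-(2 * η' / σ ^ 2) * ∑ i : Fin n, ‖xt i + ζ‖ ^ ℓ) with hF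
  have key2 := hV (η * (1 - ε)) (mul_pos hη h1ε) xt
  have key3 := hV (η * (1 - ε) ^ ℓ) (mul_pos hη hℓpos) xt
  have key1 := hV η hη (fun i => (1 - ε) • xt i)
  have hint2 : Integrable (F (η * (1 - ε))) := by
    by_contra h
    rw [integral_undef h] at key2
    exact (Real.exp_pos _).ne' key2
  have hint3 : Integrable (F (η * (1 - ε) ^ ℓ)) := by
    by_contra h
    rw [integral_undef h] at key3
    exact (Real.exp_pos _).ne' key3
  have hcv : (∫ ζ : EuclideanSpace ℝ (Fin d),
        Real.exp (-(2 * η / σ ^ 2) * ∑ i : Fin n, ‖(1 - ε) • xt i + ζ‖ ^ ℓ))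
      = ((1 - ε) ^ d) * ∫ ξ : EuclideanSpace ℝ (Fin d), F (η * (1 - ε) ^ ℓ) ξ := by
    have hcomp : ∀ ξ : EuclideanSpace ℝ (Fin d),
        Real.exp (-(2 * η / σ ^ 2) * ∑ i : Fin n, ‖(1 - ε) • xt i + (1 - ε) • ξ‖ ^ ℓ)
          = F (η * (1 - ε) ^ ℓ) ξ := by
      intro ξ
      have hnorm : ∀ i : Fin n, ‖(1 - ε) • xt i + (1 - ε) • ξ‖ ^ ℓ
          = (1 - ε) ^ ℓ * ‖xt i + ξ‖ ^ ℓ := by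
        intro i
        rw [← smul_add, norm_smul, Real.norm_eq_abs, abs_of_pos h1ε,
          Real.mul_rpow h1ε.le (norm_nonneg _)]
      simp_rw [hnorm, ← Finset.mul_sum, hF]
      ring_nf
    have := MeasureTheory.Measure.integral_comp_smul
      (volume : Measure (EuclideanSpace ℝ (Fin d)))
      (fun ζ => Real.exp (-(2 * η / σ ^ 2) * ∑ i : Fin n, ‖(1 - ε) • xt i + ζ‖ ^ ℓ)) (1 - ε)
    simp_rw [hcomp] at this
    rw [this, finrank_euclideanSpace_fin, abs_of_pos (inv_pos.2 (pow_pos h1ε d)),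
      smul_eq_mul]
    field_simp
  have hmono : ∀ ξ : EuclideanSpace ℝ (Fin d), F (η * (1 - ε)) ξ ≤ F (η * (1 - ε) ^ ℓ) ξ := by
    intro ξ
    apply Real.exp_le_exp.2
    have hS : 0 ≤ ∑ i : Fin n, ‖xt i + ξ‖ ^ ℓ :=
      Finset.sum_nonneg fun i _ => Real.rpow_nonneg (norm_nonneg _) _
    have : 2 * (η * (1 - ε) ^ ℓ) / σ ^ 2 ≤ 2 * (η * (1 - ε)) / σ ^ 2 := by
      apply div_le_div_of_nonneg_right _ (by positivity)
      nlinarith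
    nlinarith
  have hile : (∫ ξ : EuclideanSpace ℝ (Fin d), F (η * (1 - ε)) ξ)
      ≤ ∫ ξ : EuclideanSpace ℝ (Fin d), F (η * (1 - ε) ^ ℓ) ξ :=
    integral_mono hint2 hint3 hmono
  have hexp : ((1 - ε) ^ d) * Real.exp (-(2 * n / σ ^ 2) * Vhat (η * (1 - ε)) xt)
      ≤ Real.exp (-(2 * n / σ ^ 2) * Vhat η (fun i => (1 - ε) • xt i)) := by
    rw [key1, key2, hcv]
    exact mul_le_mul_of_nonneg_left hile (by positivity)
  have hlog := Real.log_le_log (by positivity) hexp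
  rw [Real.log_mul (by positivity) (Real.exp_pos _).ne', Real.log_exp, Real.log_exp,
    Real.log_pow] at hlog
  have hn0 : (0:ℝ) < (n:ℝ) := by exact_mod_cast hn
  have hσ2 : (σ:ℝ) ^ 2 ≠ 0 := by positivity
  rw [← sub_nonneg]
  have heq : (-(σ ^ 2 * d / (2 * n)) * Real.log (1 - ε) + Vhat (η * (1 - ε)) xt
      - Vhat η fun i => (1 - ε) • xt i)
      = (σ ^ 2 / (2 * n)) * ((-(2 * n / σ ^ 2) * Vhat η (fun i => (1 - ε) • xt i))
      - (↑d * Real.log (1 - ε) + -(2 * n / σ ^ 2) * Vhat (η * (1 - ε)) xt)) := by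
    field_simp
    ring
  rw [heq]
  have h2 : 0 ≤ (-(2 * n / σ ^ 2) * Vhat η (fun i => (1 - ε) • xt i))
      - (↑d * Real.log (1 - ε) + -(2 * n / σ ^ 2) * Vhat (η * (1 - ε)) xt) := by
    linarith
  positivity
end

section
/- Let B : [0,1] → ℝ be continuous and nonnegative, and let (μ_n) be a sequence of probability measures on ℝ converging weakly to μ. Then ∫_ℝ B(F_μ(x)) dx ≤ liminf_{n→∞} ∫_ℝ B(F_{μ_n}(x)) dx, where F_ν denotes the CDF of ν. -/
/-!
At every point `x` that is not an atom of `μ`, the half-line `Iic x` has `μ`-null frontier, so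
weak convergence gives `F_{μₙ}(x) → F_μ(x)` by the portmanteau theorem. Atoms are countable, hence
Lebesgue-null, so `B ∘ F_{μₙ} → B ∘ F_μ` almost everywhere, and Fatou's lemma concludes.
-/

open MeasureTheory Filter Topology Set

lemma measure_toReal_mem_Icc {α : Type*} [MeasurableSpace α] (ν : Measure α)
    [IsZeroOrProbabilityMeasure ν] (s : Set α) : (ν s).toReal ∈ Icc (0 : ℝ) 1 :=
  ⟨measureReal_nonneg, measureReal_le_one⟩

lemma ContinuousOn.measurable_comp_of_forall_mem {α β γ : Type*} [MeasurableSpace α]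
    [TopologicalSpace β] [MeasurableSpace β] [OpensMeasurableSpace β]
    [TopologicalSpace γ] [MeasurableSpace γ] [BorelSpace γ] {g : β → γ} {s : Set β}
    (hg : ContinuousOn g s) {f : α → β} (hf : Measurable f) (hfs : ∀ a, f a ∈ s) :
    Measurable fun a => g (f a) :=
  hg.domRestrict.measurable.comp (hf.subtype_mk (h := hfs))

lemma measurable_comp_cdf {B : ℝ → ℝ} (hB : ContinuousOn B (Icc 0 1))
    (ν : Measure ℝ) [IsProbabilityMeasure ν] : Measurable fun x => B (ν (Iic x)).toReal := by
  have hmono : Monotone fun x => (ν (Iic x)).toReal := fun _ _ hab =>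
    ENNReal.toReal_mono (measure_ne_top ν _) (measure_mono (Iic_subset_Iic.mpr hab))
  exact hB.measurable_comp_of_forall_mem hmono.measurable (fun x => measure_toReal_mem_Icc ν _)

lemma MeasureTheory.Measure.ae_measure_singleton_eq_zero {α : Type*} [MeasurableSpace α]
    [MeasurableSingletonClass α] (μ ν : Measure α) [SFinite μ] [NullSingletonClass ν] :
    ∀ᵐ x ∂ν, μ {x} = 0 := by
  have hcount : {x | 0 < μ {x}}.Countable :=
    Measure.countable_meas_pos_of_disjoint_iUnion₀
      (fun x => (measurableSet_singleton x).nullMeasurableSet)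
      (fun _ _ hab => (disjoint_singleton.mpr hab).aedisjoint)
  filter_upwards [hcount.ae_notMem ν] with x hx
  simpa using hx

lemma MeasureTheory.ProbabilityMeasure.tendsto_measure_Iic_of_tendsto {Ω ι : Type*} {L : Filter ι}
    [MeasurableSpace Ω] [TopologicalSpace Ω] [OpensMeasurableSpace Ω] [HasOuterApproxClosed Ω]
    [LinearOrder Ω] [OrderClosedTopology Ω] {μ : ProbabilityMeasure Ω}
    {μs : ι → ProbabilityMeasure Ω} (hlim : Tendsto μs L (𝓝 μ)) {x : Ω}
    (hx : (μ : Measure Ω) {x} = 0) :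
    Tendsto (fun i => (μs i : Measure Ω) (Iic x)) L (𝓝 ((μ : Measure Ω) (Iic x))) :=
  ProbabilityMeasure.tendsto_measure_of_null_frontier_of_tendsto' hlim
    (measure_mono_null (frontier_Iic_subset x) hx)

lemma ae_tendsto_comp_cdf_of_tendsto {B : ℝ → ℝ} (hB : ContinuousOn B (Icc 0 1))
    {μ : ProbabilityMeasure ℝ} {μs : ℕ → ProbabilityMeasure ℝ} (hlim : Tendsto μs atTop (𝓝 μ)) :
    ∀ᵐ x, Tendsto (fun n => B ((μs n : Measure ℝ) (Iic x)).toReal) atTop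
      (𝓝 (B ((μ : Measure ℝ) (Iic x)).toReal)) := by
  filter_upwards [Measure.ae_measure_singleton_eq_zero (μ : Measure ℝ) volume] with x hx
  have hcdf := (ENNReal.tendsto_toReal (measure_ne_top _ _)).comp
    (ProbabilityMeasure.tendsto_measure_Iic_of_tendsto hlim hx)
  refine (hB _ (measure_toReal_mem_Icc _ _)).tendsto.comp ?_
  exact tendsto_nhdsWithin_iff.mpr
    ⟨hcdf, Eventually.of_forall fun n => measure_toReal_mem_Icc _ _⟩

lemma lintegral_le_liminf_lintegral_of_ae_tendsto {α ι : Type*} [MeasurableSpace α]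
    {μ : Measure α} {u : Filter ι} [u.NeBot] [u.IsCountablyGenerated] {f : ι → α → ENNReal}
    {g : α → ENNReal} (hf : ∀ i, AEMeasurable (f i) μ)
    (hfg : ∀ᵐ a ∂μ, Tendsto (fun i => f i a) u (𝓝 (g a))) :
    ∫⁻ a, g a ∂μ ≤ liminf (fun i => ∫⁻ a, f i a ∂μ) u :=
  (lintegral_congr_ae (hfg.mono fun _ ha => ha.liminf_eq.symm)).trans_le
    (lintegral_liminf_le' hf)

theorem stmt_18_general (B : ℝ → ℝ) (hB_cont : ContinuousOn B (Icc 0 1))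
    (μ : Measure ℝ) (μs : ℕ → Measure ℝ)
    [IsProbabilityMeasure μ] [∀ n, IsProbabilityMeasure (μs n)]
    (hweak : ∀ f : BoundedContinuousFunction ℝ ℝ,
      Tendsto (fun n => ∫ x, f x ∂(μs n)) atTop (𝓝 (∫ x, f x ∂μ))) :
    ∫⁻ x, ENNReal.ofReal (B ((μ (Iic x)).toReal))
      ≤ Filter.liminf (fun n => ∫⁻ x, ENNReal.ofReal (B (((μs n) (Iic x)).toReal))) atTop := by
  have hlim : Tendsto (β := ProbabilityMeasure ℝ) (fun n => ⟨μs n, inferInstance⟩) atTop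
      (𝓝 ⟨μ, inferInstance⟩) :=
    ProbabilityMeasure.tendsto_iff_forall_integral_tendsto.mpr hweak
  refine lintegral_le_liminf_lintegral_of_ae_tendsto
    (fun n => (measurable_comp_cdf hB_cont (μs n)).ennreal_ofReal.aemeasurable) ?_
  filter_upwards [ae_tendsto_comp_cdf_of_tendsto hB_cont hlim] with x hx
  exact ENNReal.tendsto_ofReal hx

/-- Lower semicontinuity of the rank-based energy: if `B : [0,1] → [0,∞)` is continuous and
nonnegative and `μₙ → μ` weakly (against bounded continuous functions), then
`∫ B(F_μ(x)) dx ≤ liminf ∫ B(F_{μₙ}(x)) dx`. -/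
theorem stmt_18 (B : ℝ → ℝ) (hB_cont : ContinuousOn B (Icc 0 1))
    (hB_nonneg : ∀ u ∈ Icc (0 : ℝ) 1, 0 ≤ B u)
    (μ : Measure ℝ) (μs : ℕ → Measure ℝ)
    [IsProbabilityMeasure μ] [∀ n, IsProbabilityMeasure (μs n)]
    (hweak : ∀ f : BoundedContinuousFunction ℝ ℝ,
      Tendsto (fun n => ∫ x, f x ∂(μs n)) atTop (𝓝 (∫ x, f x ∂μ))) :
    ∫⁻ x, ENNReal.ofReal (B ((μ (Iic x)).toReal))
      ≤ Filter.liminf (fun n => ∫⁻ x, ENNReal.ofReal (B (((μs n) (Iic x)).toReal))) atTop :=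
  stmt_18_general B hB_cont μ μs hweak
end
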